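/- arXiv:1112.6172 — 3 statements merged into one kernel-verified Lean document; each statement's English description precedes it below -/
import Mathlib

section
/- Let G and H be finite simple graphs and let U be an independent set of the categorical (tensor) product G × H. Define A = {(x,y) ∈ U : there is no (x',y) ∈ U with {x,x'} ∈ E(G)} and B = U \ A. Then for every vertex y of H, the section A(y) = {x : (x,y) ∈ A} is an independent set of G, and for every vertex x of G, the section B(x) = {y : (x,y) ∈ B} is an independent set of H. -/
open Filter

/-- Categorical (tensor) product of two simple graphs. -/
def tensorProd {α β : Type*} (G : SimpleGraph α) (H : SimpleGraph β) :
    SimpleGraph (α × β) where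
  Adj p q := G.Adj p.1 q.1 ∧ H.Adj p.2 q.2
  symm := ⟨fun p q h => ⟨h.1.symm, h.2.symm⟩⟩
  loopless := ⟨fun p h => G.loopless.irrefl _ h.1⟩

section RowIsolated

variable {α β : Type*} (G : SimpleGraph α) (U : Set (α × β))

def rowIsolated : Set (α × β) :=
  {p | p ∈ U ∧ ¬ ∃ x', (x', p.2) ∈ U ∧ G.Adj p.1 x'}

theorem not_adj_of_mem_rowIsolated {y : β} {x₁ x₂ : α} (h₁ : (x₁, y) ∈ rowIsolated G U)
    (h₂ : (x₂, y) ∈ rowIsolated G U) : ¬ G.Adj x₁ x₂ :=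
  fun hadj => h₁.2 ⟨x₂, h₂.1, hadj⟩

theorem exists_adj_of_mem_diff_rowIsolated {p : α × β} (hp : p ∈ U \ rowIsolated G U) :
    ∃ x', (x', p.2) ∈ U ∧ G.Adj p.1 x' := by
  by_contra h
  exact hp.2 ⟨hp.1, h⟩

/-- If `(x, y₁)` has a row-neighbour `(x', y₁)` in `U`, then `(x, y₂) ∈ U` with `y₁ ~ y₂` would be
adjacent to `(x', y₁)` in `G × H`. -/
theorem not_adj_of_mem_diff_rowIsolated {H : SimpleGraph β}
    (hU : ∀ p ∈ U, ∀ q ∈ U, ¬ (tensorProd G H).Adj p q) {x : α} {y₁ y₂ : β}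
    (h₁ : (x, y₁) ∈ U \ rowIsolated G U) (h₂ : (x, y₂) ∈ U \ rowIsolated G U) :
    ¬ H.Adj y₁ y₂ := fun hadj => by
  obtain ⟨x', hx'U, hxx'⟩ := exists_adj_of_mem_diff_rowIsolated G U h₁
  exact hU (x, y₂) h₂.1 (x', y₁) hx'U ⟨hxx', hadj.symm⟩

end RowIsolated

theorem stmt0_general {α β : Type*}
    (G : SimpleGraph α) (H : SimpleGraph β) (U : Set (α × β))
    (hU : ∀ p ∈ U, ∀ q ∈ U, ¬ (tensorProd G H).Adj p q)
    (A B : Set (α × β))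
    (hA : A = {p | p ∈ U ∧ ¬ ∃ x', (x', p.2) ∈ U ∧ G.Adj p.1 x'})
    (hB : B = U \ A) :
    (∀ y : β, ∀ x₁ ∈ {x | (x, y) ∈ A}, ∀ x₂ ∈ {x | (x, y) ∈ A}, ¬ G.Adj x₁ x₂) ∧
    (∀ x : α, ∀ y₁ ∈ {y | (x, y) ∈ B}, ∀ y₂ ∈ {y | (x, y) ∈ B}, ¬ H.Adj y₁ y₂) := by
  change A = rowIsolated G U at hA
  subst hA hB
  exact ⟨fun _ _ h₁ _ h₂ => not_adj_of_mem_rowIsolated G U h₁ h₂,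
    fun _ _ h₁ _ h₂ => not_adj_of_mem_diff_rowIsolated G U hU h₁ h₂⟩

theorem stmt0 {α β : Type*} [Fintype α] [Fintype β]
    (G : SimpleGraph α) (H : SimpleGraph β) (U : Set (α × β))
    (hU : ∀ p ∈ U, ∀ q ∈ U, ¬ (tensorProd G H).Adj p q)
    (A B : Set (α × β))
    (hA : A = {p | p ∈ U ∧ ¬ ∃ x', (x', p.2) ∈ U ∧ G.Adj p.1 x'})
    (hB : B = U \ A) :
    (∀ y : β, ∀ x₁ ∈ {x | (x, y) ∈ A}, ∀ x₂ ∈ {x | (x, y) ∈ A}, ¬ G.Adj x₁ x₂) ∧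
    (∀ x : α, ∀ y₁ ∈ {y | (x, y) ∈ B}, ∀ y₂ ∈ {y | (x, y) ∈ B}, ¬ H.Adj y₁ y₂) :=
  stmt0_general G H U hU A B hA hB
end

section
/- Let G and H be finite simple graphs and let U be an independent set of G × H. With A = {(x,y) ∈ U : no (x',y) ∈ U has {x,x'} ∈ E(G)} and B = U \ A, define N^G(A) = {(x,y) : x ∈ N_G(A(y))} and N^H(B) = {(x,y) : y ∈ N_H(B(x))}, where A(y) = {x : (x,y) ∈ A} and B(x) = {y : (x,y) ∈ B}. Then the four sets A, B, N^G(A), N^H(B) are pairwise disjoint subsets of V(G × H). -/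
open Filter

/-!
Write `A` for the points of `U` with no `G`-neighbour of `U` in their `H`-fibre and `B = U \ A`.
`N^G(A)` avoids `U`: a point of `U` in it would be a `G`-neighbour of a point of `A` in the same
fibre. Every point `(x, y)` of `B` has a `G`-neighbour `(x', y) ∈ U`, so a point `(x, z)` of
`N^H(B)` would be adjacent in `G × H` to `(x', y) ∈ U`; hence `N^H(B)` avoids `U` as well.
Finally a common point `(x, y)` of `N^G(A)` and `N^H(B)` comes from `(x', y) ∈ A` and
`(x, y') ∈ B` with `x' ~ x` and `y ~ y'`, two adjacent points of `U`.
-/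

theorem SimpleGraph.IsIndepSet.not_adj {V : Type*} {G : SimpleGraph V} {s : Set V}
    (hs : G.IsIndepSet s) {v w : V} (hv : v ∈ s) (hw : w ∈ s) : ¬ G.Adj v w :=
  fun hadj => hs hv hw hadj.ne hadj

namespace TensorProdIndep

variable {α β : Type*}

/-- The set `A` of the paper. -/
def fiberIsolated (G : SimpleGraph α) (U : Set (α × β)) : Set (α × β) :=
  {p | p ∈ U ∧ ¬ ∃ x', (x', p.2) ∈ U ∧ G.Adj p.1 x'}

/-- `N^G(S) = {(x, y) : x ∈ N_G(S(y))}`. -/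
def leftNbhd (G : SimpleGraph α) (S : Set (α × β)) : Set (α × β) :=
  {p | ∃ x', (x', p.2) ∈ S ∧ G.Adj x' p.1}

/-- `N^H(T) = {(x, y) : y ∈ N_H(T(x))}`. -/
def rightNbhd (H : SimpleGraph β) (T : Set (α × β)) : Set (α × β) :=
  {p | ∃ y', (p.1, y') ∈ T ∧ H.Adj y' p.2}

theorem fiberIsolated_subset (G : SimpleGraph α) (U : Set (α × β)) : fiberIsolated G U ⊆ U :=
  fun _ hp => hp.1

theorem exists_adj_of_mem_diff_fiberIsolated {G : SimpleGraph α} {U : Set (α × β)} {p : α × β}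
    (hp : p ∈ U \ fiberIsolated G U) : ∃ x', (x', p.2) ∈ U ∧ G.Adj p.1 x' := by
  by_contra h
  exact hp.2 ⟨hp.1, h⟩

theorem disjoint_leftNbhd_fiberIsolated (G : SimpleGraph α) (U : Set (α × β)) :
    Disjoint U (leftNbhd G (fiberIsolated G U)) := by
  rw [Set.disjoint_left]
  rintro p hpU ⟨x', ⟨-, hx'_isolated⟩, hadj⟩
  exact hx'_isolated ⟨p.1, hpU, hadj⟩

variable {G : SimpleGraph α} {H : SimpleGraph β} {U : Set (α × β)}

theorem disjoint_rightNbhd_diff_fiberIsolated (hU : (tensorProd G H).IsIndepSet U) :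
    Disjoint U (rightNbhd H (U \ fiberIsolated G U)) := by
  rw [Set.disjoint_left]
  rintro p hpU ⟨y', hB, hHadj⟩
  obtain ⟨x', hx'U, hGadj⟩ := exists_adj_of_mem_diff_fiberIsolated hB
  exact hU.not_adj hx'U hpU ⟨hGadj.symm, hHadj⟩

theorem disjoint_leftNbhd_rightNbhd (hU : (tensorProd G H).IsIndepSet U) {S T : Set (α × β)}
    (hS : S ⊆ U) (hT : T ⊆ U) : Disjoint (leftNbhd G S) (rightNbhd H T) := by
  rw [Set.disjoint_left]
  rintro p ⟨x', hx'S, hGadj⟩ ⟨y', hy'T, hHadj⟩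
  exact hU.not_adj (hS hx'S) (hT hy'T) ⟨hGadj, hHadj.symm⟩

end TensorProdIndep

open TensorProdIndep in
theorem stmt1_general {α β : Type*}
    (G : SimpleGraph α) (H : SimpleGraph β) (U : Set (α × β))
    (hU : ∀ p ∈ U, ∀ q ∈ U, ¬ (tensorProd G H).Adj p q)
    (A B NG NH : Set (α × β))
    (hA : A = {p | p ∈ U ∧ ¬ ∃ x', (x', p.2) ∈ U ∧ G.Adj p.1 x'})
    (hB : B = U \ A)
    (hNG : NG = {p | ∃ x', (x', p.2) ∈ A ∧ G.Adj x' p.1})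
    (hNH : NH = {p | ∃ y', (p.1, y') ∈ B ∧ H.Adj y' p.2}) :
    Disjoint A B ∧ Disjoint A NG ∧ Disjoint A NH ∧
    Disjoint B NG ∧ Disjoint B NH ∧ Disjoint NG NH := by
  have hU' : (tensorProd G H).IsIndepSet U := fun p hp q hq _ => hU p hp q hq
  change A = fiberIsolated G U at hA
  change NG = leftNbhd G A at hNG
  change NH = rightNbhd H B at hNH
  subst hA hB hNG hNH
  have hAU := fiberIsolated_subset G U
  have hNG_U := disjoint_leftNbhd_fiberIsolated G U
  have hNH_U := disjoint_rightNbhd_diff_fiberIsolated hU'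
  exact ⟨Set.disjoint_sdiff_right, hNG_U.mono_left hAU, hNH_U.mono_left hAU,
    hNG_U.mono_left Set.sdiff_subset, hNH_U.mono_left Set.sdiff_subset,
    disjoint_leftNbhd_rightNbhd hU' hAU Set.sdiff_subset⟩

theorem stmt1 {α β : Type*} [Fintype α] [Fintype β]
    (G : SimpleGraph α) (H : SimpleGraph β) (U : Set (α × β))
    (hU : ∀ p ∈ U, ∀ q ∈ U, ¬ (tensorProd G H).Adj p q)
    (A B NG NH : Set (α × β))
    (hA : A = {p | p ∈ U ∧ ¬ ∃ x', (x', p.2) ∈ U ∧ G.Adj p.1 x'})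
    (hB : B = U \ A)
    (hNG : NG = {p | ∃ x', (x', p.2) ∈ A ∧ G.Adj x' p.1})
    (hNH : NH = {p | ∃ y', (p.1, y') ∈ B ∧ H.Adj y' p.2}) :
    Disjoint A B ∧ Disjoint A NG ∧ Disjoint A NH ∧
    Disjoint B NG ∧ Disjoint B NH ∧ Disjoint NG NH :=
  stmt1_general G H U hU A B NG NH hA hB hNG hNH
end

section
/- Let G and H be finite simple graphs and let U be an independent set of G × H. Then every independent set U of G × H satisfies |N_{G×H}(U)| ≥ min{b(G), b(H)} · |U|, where b(K) = min{|N_K(W)|/|W| : W a nonempty independent set of K}, provided b(G) ≥ 1 or b(H) ≥ 1. -/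
open scoped Classical
open Filter

/-- A finset is independent. -/
def IsIndep {α : Type*} (G : SimpleGraph α) (U : Finset α) : Prop :=
  ∀ u ∈ U, ∀ v ∈ U, ¬ G.Adj u v

/-- Neighborhood of a finset. -/
noncomputable def nbhd {α : Type*} [Fintype α] (G : SimpleGraph α) (U : Finset α) : Finset α :=
  Finset.univ.filter (fun v => ∃ u ∈ U, G.Adj u v)

/-- Independence number. -/
noncomputable def alphaNum {α : Type*} [Fintype α] (G : SimpleGraph α) : ℕ :=
  sSup {n : ℕ | ∃ U : Finset α, IsIndep G U ∧ U.card = n}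

/-- Independence ratio. -/
noncomputable def iRatio {α : Type*} [Fintype α] (G : SimpleGraph α) : ℝ :=
  (alphaNum G : ℝ) / (Fintype.card α : ℝ)

/-- a(G): the maximum of |U|/(|U|+|N(U)|) over nonempty independent sets. -/
noncomputable def aRatio {α : Type*} [Fintype α] (G : SimpleGraph α) : ℝ :=
  sSup {r : ℝ | ∃ U : Finset α, U.Nonempty ∧ IsIndep G U ∧
    r = (U.card : ℝ) / ((U.card : ℝ) + ((nbhd G U).card : ℝ))}

/-- b(G): the minimum of |N(U)|/|U| over nonempty independent sets. -/
noncomputable def bRatio {α : Type*} [Fintype α] (G : SimpleGraph α) : ℝ :=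
  sInf {r : ℝ | ∃ U : Finset α, U.Nonempty ∧ IsIndep G U ∧
    r = ((nbhd G U).card : ℝ) / (U.card : ℝ)}

/-- a*(G). -/
noncomputable def aStar {α : Type*} [Fintype α] (G : SimpleGraph α) : ℝ :=
  if aRatio G ≤ 1/2 then aRatio G else 1

/-- k-th categorical power of G. -/
def tensorPow {α : Type*} (G : SimpleGraph α) (k : ℕ) : SimpleGraph (Fin k → α) where
  Adj x y := x ≠ y ∧ ∀ i, G.Adj (x i) (y i)
  symm := ⟨fun x y h => ⟨h.1.symm, fun i => (h.2 i).symm⟩⟩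
  loopless := ⟨fun x h => h.1 rfl⟩

/-- Disjoint union of two simple graphs. -/
def disjUnion {α β : Type*} (G : SimpleGraph α) (H : SimpleGraph β) :
    SimpleGraph (α ⊕ β) where
  Adj p q := match p, q with
    | Sum.inl a, Sum.inl b => G.Adj a b
    | Sum.inr a, Sum.inr b => H.Adj a b
    | _, _ => False
  symm := ⟨by rintro (a|a) (b|b) h <;> simp_all <;> exact h.symm⟩
  loopless := ⟨by rintro (a|a) h <;> simp_all⟩

/-
Write `U_y = {x | (x, y) ∈ U}` (`column U y`) and `W_x = {y | x ∈ N_G(U_y)}`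
(`linkedRows G U x`). Then `N_{G×H}(U)` is the disjoint union of the rows `{x} × N_H(W_x)`,
and `∑ₓ |W_x| = ∑_y |N_G(U_y)|`. For any vertex set `A`, the part `A \ N(A)` is independent
and its neighbourhood misses `A ∩ N(A)`, so `|N(A)| ≥ |A| + (b - 1) |A \ N(A)|`. Applying this
to the columns in `G` and to the sets `W_x` in `H`, and using that independence of `U` forces
`∑_y |U_y ∩ N_G(U_y)| ≤ ∑ₓ |W_x \ N_H(W_x)|`, leaves linear inequalities between these counts
from which the bound follows as soon as `b(G) ≥ 1` or `b(H) ≥ 1`.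
-/

open Finset

section Nbhd

variable {γ : Type*} [Fintype γ] (K : SimpleGraph γ)

theorem mem_nbhd {A : Finset γ} {v : γ} : v ∈ nbhd K A ↔ ∃ u ∈ A, K.Adj u v := by
  simp [nbhd]

theorem nbhd_mono {A B : Finset γ} (h : A ⊆ B) : nbhd K A ⊆ nbhd K B := fun v hv => by
  obtain ⟨u, hu, huv⟩ := (mem_nbhd K).1 hv
  exact (mem_nbhd K).2 ⟨u, h hu, huv⟩

theorem bRatio_nonneg : 0 ≤ bRatio K :=
  Real.sInf_nonneg <| by rintro r ⟨A, -, -, rfl⟩; positivity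

theorem bRatio_mul_card_le {I : Finset γ} (hI : IsIndep K I) :
    bRatio K * #I ≤ #(nbhd K I) := by
  rcases I.eq_empty_or_nonempty with rfl | hne
  · simp
  · have hbdd : BddBelow
        {r : ℝ | ∃ A : Finset γ, A.Nonempty ∧ IsIndep K A ∧ r = #(nbhd K A) / #A} :=
      ⟨0, by rintro r ⟨A, -, -, rfl⟩; positivity⟩
    exact (le_div_iff₀ (by exact_mod_cast hne.card_pos)).1 (csInf_le hbdd ⟨I, hne, hI, rfl⟩)

theorem isIndep_sdiff_nbhd (A : Finset γ) : IsIndep K (A \ nbhd K A) :=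
  fun u hu _ hv huv => (mem_sdiff.1 hv).2 ((mem_nbhd K).2 ⟨u, (mem_sdiff.1 hu).1, huv⟩)

theorem card_add_bRatio_sub_one_mul_card_sdiff_le (A : Finset γ) :
    #A + (bRatio K - 1) * #(A \ nbhd K A) ≤ #(nbhd K A) := by
  set I := A \ nbhd K A
  have hdisj : Disjoint (nbhd K I) (A ∩ nbhd K A) := by
    refine disjoint_left.2 fun v hv hv' => ?_
    obtain ⟨u, hu, huv⟩ := (mem_nbhd K).1 hv
    exact (mem_sdiff.1 hu).2 ((mem_nbhd K).2 ⟨v, (mem_inter.1 hv').1, huv.symm⟩)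
  have hcard : #(nbhd K I) + #(A ∩ nbhd K A) ≤ #(nbhd K A) := by
    rw [← card_union_of_disjoint hdisj]
    exact card_le_card (union_subset (nbhd_mono K sdiff_subset) inter_subset_right)
  have hsplit : #I + #(A ∩ nbhd K A) = #A := card_sdiff_add_card_inter A (nbhd K A)
  have hI := bRatio_mul_card_le K (isIndep_sdiff_nbhd K A)
  have : (#(nbhd K I) : ℝ) + #(A ∩ nbhd K A) ≤ #(nbhd K A) := by exact_mod_cast hcard
  have : (#I : ℝ) + #(A ∩ nbhd K A) = #A := by exact_mod_cast hsplit
  linarith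

end Nbhd

section Slices

variable {α β : Type*} [Fintype α] [Fintype β]

theorem card_eq_sum_card_slice_fst (s : Finset (α × β)) :
    #s = ∑ a, #{b | (a, b) ∈ s} := by
  simp only [card_filter]
  rw [← Fintype.sum_prod_type fun p => if p ∈ s then 1 else 0, ← card_filter,
    filter_mem_eq_inter, univ_inter]

theorem card_eq_sum_card_slice_snd (s : Finset (α × β)) :
    #s = ∑ b, #{a | (a, b) ∈ s} := by
  simp only [card_filter]
  rw [← Fintype.sum_prod_type_right fun p => if p ∈ s then 1 else 0, ← card_filter,
    filter_mem_eq_inter, univ_inter]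

end Slices

section TensorProd

variable {α β : Type*} [Fintype α]

noncomputable def column (U : Finset (α × β)) (y : β) : Finset α := {x | (x, y) ∈ U}

theorem mem_column {U : Finset (α × β)} {x : α} {y : β} : x ∈ column U y ↔ (x, y) ∈ U := by
  simp [column]

variable [Fintype β] (G : SimpleGraph α) (H : SimpleGraph β) (U : Finset (α × β))

noncomputable def linkedRows (x : α) : Finset β := {y | x ∈ nbhd G (column U y)}

theorem mem_linkedRows {x : α} {y : β} :
    y ∈ linkedRows G U x ↔ ∃ x', (x', y) ∈ U ∧ G.Adj x' x := by
  simp [linkedRows, mem_nbhd, mem_column]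

theorem mem_nbhd_tensorProd {a : α} {b : β} :
    (a, b) ∈ nbhd (tensorProd G H) U ↔ b ∈ nbhd H (linkedRows G U a) := by
  simp only [mem_nbhd, mem_linkedRows, tensorProd, Prod.exists]
  constructor
  · rintro ⟨x, y, hxy, hG, hH⟩
    exact ⟨y, ⟨x, hxy, hG⟩, hH⟩
  · rintro ⟨y, ⟨x, hxy, hG⟩, hH⟩
    exact ⟨x, y, hxy, hG, hH⟩

theorem card_eq_sum_card_column : #U = ∑ y, #(column U y) :=
  card_eq_sum_card_slice_snd U

theorem card_nbhd_tensorProd :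
    #(nbhd (tensorProd G H) U) = ∑ x, #(nbhd H (linkedRows G U x)) := by
  rw [card_eq_sum_card_slice_fst]
  simp only [mem_nbhd_tensorProd, filter_mem_eq_inter, univ_inter]

theorem sum_card_linkedRows :
    ∑ x, #(linkedRows G U x) = ∑ y, #(nbhd G (column U y)) := by
  simpa only [bipartiteAbove, bipartiteBelow, filter_mem_eq_inter, univ_inter, linkedRows] using
    sum_card_bipartiteAbove_eq_sum_card_bipartiteBelow (s := univ) (t := univ)
      fun x y => x ∈ nbhd G (column U y)

-- If `x ∈ column U y ∩ N(column U y)`, then `y ∈ linkedRows G U x`, and `y` has no neighbour in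
-- `linkedRows G U x`: such a neighbour `y'` and a witness `(x', y') ∈ U` with `x' ~ x` would make
-- `(x', y')` adjacent to `(x, y) ∈ U`.
theorem sum_card_column_le (hU : IsIndep (tensorProd G H) U) :
    ∑ y, #(column U y) ≤ ∑ y, #(column U y \ nbhd G (column U y)) +
      ∑ x, #(linkedRows G U x \ nbhd H (linkedRows G U x)) := by
  have hinter : ∑ y, #(column U y ∩ nbhd G (column U y)) ≤
      ∑ x, #(linkedRows G U x \ nbhd H (linkedRows G U x)) := by
    have := sum_card_bipartiteAbove_eq_sum_card_bipartiteBelow (s := univ) (t := univ)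
      fun x y => x ∈ column U y ∩ nbhd G (column U y)
    simp only [bipartiteAbove, bipartiteBelow, filter_mem_eq_inter, univ_inter] at this
    rw [← this]
    refine sum_le_sum fun x _ => card_le_card fun y hy => ?_
    obtain ⟨hxy, hx⟩ := mem_inter.1 (mem_filter.1 hy).2
    refine mem_sdiff.2 ⟨mem_filter.2 ⟨mem_univ _, hx⟩, fun hy' => ?_⟩
    obtain ⟨y', hy', hH⟩ := (mem_nbhd H).1 hy'
    obtain ⟨x', hx'y', hG⟩ := (mem_linkedRows G U).1 hy'
    exact hU _ hx'y' _ (mem_column.1 hxy) ⟨hG, hH⟩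
  calc ∑ y, #(column U y)
      = ∑ y, (#(column U y \ nbhd G (column U y)) + #(column U y ∩ nbhd G (column U y))) :=
        sum_congr rfl fun y _ => (card_sdiff_add_card_inter _ _).symm
    _ ≤ _ := by rw [sum_add_distrib]; omega

end TensorProd

theorem min_mul_le_of_expansion {bG bH T Q P S N : ℝ} (hbH : 0 ≤ bH)
    (hb : 1 ≤ bG ∨ 1 ≤ bH) (hQ : 0 ≤ Q) (hQT : Q ≤ T) (hPS : P ≤ S) (hTQP : T ≤ Q + P)
    (hS : T + (bG - 1) * Q ≤ S) (hN : S + (bH - 1) * P ≤ N) :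
    min bG bH * T ≤ N := by
  rcases le_or_gt 1 bH with hbH1 | hbH1
  · have : bH * (T - Q) + bG * Q ≤ N := by nlinarith
    nlinarith [min_le_left bG bH, min_le_right bG bH]
  · have hbG1 : 1 ≤ bG := hb.resolve_right hbH1.not_ge
    have hTS : T ≤ S := by nlinarith
    nlinarith [min_le_right bG bH, mul_nonneg (sub_nonneg.2 hbH1.le) (sub_nonneg.2 hPS),
      mul_nonneg hbH (sub_nonneg.2 hTS)]

theorem stmt4_general {α β : Type*} [Fintype α] [Fintype β]
    (G : SimpleGraph α) (H : SimpleGraph β)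
    (h : 1 ≤ bRatio G ∨ 1 ≤ bRatio H)
    (U : Finset (α × β)) (hU : IsIndep (tensorProd G H) U) :
    min (bRatio G) (bRatio H) * (U.card : ℝ) ≤ ((nbhd (tensorProd G H) U).card : ℝ) := by
  have hcolumns := sum_le_sum fun y (_ : y ∈ univ) =>
    card_add_bRatio_sub_one_mul_card_sdiff_le G (column U y)
  have hrows := sum_le_sum fun x (_ : x ∈ univ) =>
    card_add_bRatio_sub_one_mul_card_sdiff_le H (linkedRows G U x)
  have hdouble : ∑ y, (#(nbhd G (column U y)) : ℝ) = ∑ x, (#(linkedRows G U x) : ℝ) := by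
    exact_mod_cast (sum_card_linkedRows G U).symm
  simp only [sum_add_distrib, ← mul_sum, hdouble] at hcolumns hrows
  have hQT : ∑ y, (#(column U y \ nbhd G (column U y)) : ℝ) ≤ ∑ y, (#(column U y) : ℝ) := by
    exact_mod_cast sum_le_sum fun y _ => card_le_card sdiff_subset
  have hPS : ∑ x, (#(linkedRows G U x \ nbhd H (linkedRows G U x)) : ℝ) ≤
      ∑ x, (#(linkedRows G U x) : ℝ) := by
    exact_mod_cast sum_le_sum fun x _ => card_le_card sdiff_subset
  rw [card_eq_sum_card_column, card_nbhd_tensorProd]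
  push_cast
  exact min_mul_le_of_expansion (bRatio_nonneg H) h (by positivity) hQT hPS
    (by exact_mod_cast sum_card_column_le G H U hU) hcolumns hrows

theorem stmt4 {α β : Type*} [Fintype α] [Fintype β] [Nonempty α] [Nonempty β]
    (G : SimpleGraph α) (H : SimpleGraph β)
    (h : 1 ≤ bRatio G ∨ 1 ≤ bRatio H)
    (U : Finset (α × β)) (hU : IsIndep (tensorProd G H) U) :
    min (bRatio G) (bRatio H) * (U.card : ℝ) ≤ ((nbhd (tensorProd G H) U).card : ℝ) :=
  stmt4_general G H h U hU
end
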